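/- arXiv:1308.4767 — 4 statements merged into one kernel-verified Lean document; each statement's English description precedes it below -/
import Mathlib

section
/- Let n ≥ 1 and for each Boolean vector w : Fin n → Bool let ψ_w(i) : Prop denote the (negated) partition ∃o, ¬φ(i, w, o). If I⃗ = (I₁,…,Iₙ) is an n-interpolant, i.e. for every w, ψ_w(i) → ⋁_{j} (I_j(i) XOR w_j), then for every i and o, φ(i, (I₁(i),…,Iₙ(i)), o) holds. That is, an n-interpolant constitutes witness functions for all n control variables simultaneously. -/
theorem stmt_2 {I O : Type*} {n : ℕ} (hn : 1 ≤ n)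
    (φ : I → (Fin n → Bool) → O → Prop) (Ivec : Fin n → I → Prop)
    (hint : ∀ (w : Fin n → Bool) (i : I),
      (∃ o, ¬ φ i w o) → ∃ j, (Ivec j i ↔ (w j = false))) :
    ∀ (i : I) (o : O), φ i (fun j => @decide (Ivec j i) (Classical.propDecidable _)) o := by
  intro i o
  by_contra h
  obtain ⟨j, hj⟩ := hint (fun j => @decide (Ivec j i) (Classical.propDecidable _)) i ⟨o, h⟩
  by_cases hI : Ivec j i
  · simp [hI] at hj
  · simp [hI] at hj
end

section
/- Soundness of the interpolating local-A resolution rule: if A → (a ∨ C ∨ I_C), A → (¬a ∨ D ∨ I_D), B → (C' ∨ ¬I_C), and B → (D' ∨ ¬I_D), then A → (C ∨ D ∨ (I_C ∨ I_D)) and B → (C' ∨ D' ∨ ¬(I_C ∨ I_D)). -/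
theorem stmt_6 (A B C C' D D' IC ID a : Prop)
    (h1 : A → (a ∨ C ∨ IC)) (h2 : A → (¬ a ∨ D ∨ ID))
    (h3 : B → (C' ∨ ¬ IC)) (h4 : B → (D' ∨ ¬ ID)) :
    (A → (C ∨ D ∨ (IC ∨ ID))) ∧ (B → (C' ∨ D' ∨ ¬ (IC ∨ ID))) := by
  refine ⟨fun hA => ?_, fun hB => ?_⟩
  · rcases h1 hA with h | h | h
    · rcases h2 hA with g | g | g
      · exact absurd h g
      · exact Or.inr (Or.inl g)
      · exact Or.inr (Or.inr (Or.inr g))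
    · exact Or.inl h
    · exact Or.inr (Or.inr (Or.inl h))
  · rcases h3 hB with h | h
    · exact Or.inl h
    · rcases h4 hB with g | g
      · exact Or.inr (Or.inl g)
      · exact Or.inr (Or.inr (fun hI => hI.elim h g))
end

section
/- Soundness of the n-interpolating global-pivot resolution rule (n-ResG): suppose for every w, ψ_w → (a ∨ C_w ∨ ⋁_j (I^C_j XOR w_j)) and ψ_w → (¬a ∨ D_w ∨ ⋁_j (I^D_j XOR w_j)). Then for every w, ψ_w → ((C_w ∨ D_w) ∨ ⋁_j (((a ∨ I^C_j) ∧ (¬a ∨ I^D_j)) XOR w_j)). -/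
/-- `P XOR b`: `P` if `b = false`, `¬P` if `b = true`. -/
def pxor (P : Prop) (b : Bool) : Prop := if b then ¬ P else P

theorem stmt_9 {n : ℕ} (hn : 1 ≤ n)
    (ψ C D : (Fin n → Bool) → Prop) (a : Prop) (IC ID : Fin n → Prop)
    (h1 : ∀ w, ψ w → (a ∨ C w ∨ ∃ j, pxor (IC j) (w j)))
    (h2 : ∀ w, ψ w → (¬ a ∨ D w ∨ ∃ j, pxor (ID j) (w j))) :
    ∀ w, ψ w → ((C w ∨ D w) ∨ ∃ j, pxor ((a ∨ IC j) ∧ (¬ a ∨ ID j)) (w j)) := by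
  intro w hw
  by_cases ha : a
  · rcases h2 w hw with h | h | ⟨j, hj⟩
    · exact absurd ha h
    · exact Or.inl (Or.inr h)
    · refine Or.inr ⟨j, ?_⟩
      cases hwj : w j <;> simp [pxor, hwj] at hj ⊢ <;> tauto
  · rcases h1 w hw with h | h | ⟨j, hj⟩
    · exact absurd h ha
    · exact Or.inl (Or.inl h)
    · refine Or.inr ⟨j, ?_⟩
      cases hwj : w j <;> simp [pxor, hwj] at hj ⊢ <;> tauto
end

section
/- Failure of independent interpolation (the coordination counterexample): with φ(a,b,c₁,c₂,l) := (c₁ ∧ ¬c₂ ∧ ¬a) ∨ (¬c₁ ∧ c₂ ∧ ¬b) ∨ (c₁ ∧ c₂ ∧ ((¬l ∧ a) ∨ (l ∧ b))), the pair of functions c₁ := a, c₂ := b is NOT a valid pair of witness functions (there exist a, b, l with ¬φ(a,b,a,b,l)), but the pair c₁ := b, c₂ := (¬b ∨ a) IS valid: for all Booleans a, b, l, φ(a, b, b, ¬b ∨ a, l) holds. -/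
def phi (a b c₁ c₂ l : Bool) : Prop :=
  (c₁ = true ∧ ¬ c₂ = true ∧ ¬ a = true) ∨
  (¬ c₁ = true ∧ c₂ = true ∧ ¬ b = true) ∨
  (c₁ = true ∧ c₂ = true ∧ ((¬ l = true ∧ a = true) ∨ (l = true ∧ b = true)))

theorem stmt_19 :
    (∃ a b l : Bool, ¬ phi a b a b l) ∧
      (∀ a b l : Bool, phi a b b (!b || a) l) := by
  constructor
  · exact ⟨false, false, false, by simp [phi]⟩
  · intro a b l
    cases a <;> cases b <;> cases l <;> simp [phi]
end
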